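/- Let B be a unital C*-algebra, let B₀ and B₁ be unital C*-subalgebras of B (containing the unit of B), and let A := {f ∈ C([0,1], B) : f(0) ∈ B₀ and f(1) ∈ B₁}, a unital C*-subalgebra of C([0,1], B). If A admits a character, then B₀ admits a character or B₁ admits a character. -/

import Mathlib

/-!
A character `φ` of `A` restricts, on the scalar functions `C([0,1], ℂ) ⊆ A`, to evaluation at
some `t₀ ∈ [0,1]`. Pick a scalar function `h` with `h t₀ = 1` vanishing at an endpoint `≠ t₀`
(`1 - t` if `t₀ = 0`, `t / t₀` otherwise), so that `t ↦ h t • b ∈ A` for every `b` in the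
subalgebra at the other endpoint. Since `(h • b) (h • c) = h · (h • b c)` and `φ h = 1`,
the map `b ↦ φ (h • b)` is a character of that subalgebra.
-/

noncomputable section

variable {B : Type*} [NormedRing B] [StarRing B] [CStarRing B]
  [NormedAlgebra ℂ B] [CompleteSpace B] [StarModule ℂ B]

/-- The subalgebra `A = {f ∈ C([0,1], B) : f(0) ∈ B₀ and f(1) ∈ B₁}` of `C([0,1], B)`. -/
def endpointsSubalgebra (B₀ B₁ : StarSubalgebra ℂ B) :
    Subalgebra ℂ C(unitInterval, B) where
  carrier := {f | f 0 ∈ B₀ ∧ f 1 ∈ B₁}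
  mul_mem' := fun hf hg =>
    ⟨by simpa using mul_mem hf.1 hg.1, by simpa using mul_mem hf.2 hg.2⟩
  add_mem' := fun hf hg =>
    ⟨by simpa using add_mem hf.1 hg.1, by simpa using add_mem hf.2 hg.2⟩
  algebraMap_mem' := fun c =>
    ⟨by simpa [Algebra.algebraMap_eq_smul_one] using B₀.algebraMap_mem c,
     by simpa [Algebra.algebraMap_eq_smul_one] using B₁.algebraMap_mem c⟩

end

open unitInterval

def AlgHom.compLinearMapOfMulEqMul {R S A C : Type*} [CommSemiring R] [Semiring S] [Semiring A]
    [Semiring C] [Algebra R S] [Algebra R A] [Algebra R C] (φ : A →ₐ[R] C) (F : S →ₗ[R] A)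
    (u : A) (hu : φ u = 1) (hF_one : F 1 = u) (hF_mul : ∀ b c, F b * F c = u * F (b * c)) :
    S →ₐ[R] C :=
  AlgHom.ofLinearMap (φ.toLinearMap ∘ₗ F) (by simp [hF_one, hu]) fun b c => by
    show φ (F (b * c)) = φ (F b) * φ (F c)
    rw [← map_mul φ, hF_mul, map_mul φ, hu, one_mul]

theorem ContinuousMap.exists_algHom_eq_eval {X 𝕜 : Type*} [TopologicalSpace X] [CompactSpace X]
    [T2Space X] [RCLike 𝕜] (χ : C(X, 𝕜) →ₐ[𝕜] 𝕜) : ∃ x, ∀ f, χ f = f x := by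
  obtain ⟨x, hx⟩ := (WeakDual.CharacterSpace.continuousMapEval_bijective X 𝕜).2
    (WeakDual.CharacterSpace.equivAlgHom.symm χ)
  exact ⟨x, fun f => by simpa using (DFunLike.congr_fun hx f).symm⟩

section Endpoints

variable {B : Type*} [NormedRing B] [StarRing B] [NormedAlgebra ℂ B] [StarModule ℂ B]
  {B₀ B₁ : StarSubalgebra ℂ B}

variable (B₀ B₁) in
noncomputable def scalarEndpointsAlgHom : C(I, ℂ) →ₐ[ℂ] endpointsSubalgebra B₀ B₁ :=
  ((Algebra.ofId ℂ B).compLeftContinuous ℂ (continuous_algebraMap ℂ B)).codRestrict _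
    fun g => ⟨B₀.algebraMap_mem (g 0), B₁.algebraMap_mem (g 1)⟩

@[simp]
theorem scalarEndpointsAlgHom_apply_apply (g : C(I, ℂ)) (t : I) :
    (scalarEndpointsAlgHom B₀ B₁ g : C(I, B)) t = algebraMap ℂ B (g t) :=
  rfl

noncomputable def smulConstEndpoints (S : StarSubalgebra ℂ B) (h : C(I, ℂ))
    (hS : ∀ b ∈ S, h 0 • b ∈ B₀ ∧ h 1 • b ∈ B₁) : S →ₗ[ℂ] endpointsSubalgebra B₀ B₁ where
  toFun b := ⟨⟨fun t => h t • (b : B), by fun_prop⟩, hS b b.2⟩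
  map_add' b c := by ext t; simp [smul_add]
  map_smul' c b := by ext t; simp [smul_comm c]

@[simp]
theorem smulConstEndpoints_apply_apply (S : StarSubalgebra ℂ B) (h : C(I, ℂ))
    (hS : ∀ b ∈ S, h 0 • b ∈ B₀ ∧ h 1 • b ∈ B₁) (b : S) (t : I) :
    (smulConstEndpoints S h hS b : C(I, B)) t = h t • (b : B) :=
  rfl

theorem nonempty_algHom_of_bump (φ : endpointsSubalgebra B₀ B₁ →ₐ[ℂ] ℂ) {t₀ : I}
    (hφ : ∀ g, φ (scalarEndpointsAlgHom B₀ B₁ g) = g t₀) (S : StarSubalgebra ℂ B)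
    (h : C(I, ℂ)) (ht₀ : h t₀ = 1) (hS : ∀ b ∈ S, h 0 • b ∈ B₀ ∧ h 1 • b ∈ B₁) :
    Nonempty (S →ₐ[ℂ] ℂ) :=
  ⟨φ.compLinearMapOfMulEqMul (smulConstEndpoints S h hS) (scalarEndpointsAlgHom B₀ B₁ h)
    (by rw [hφ, ht₀]) (by ext t; simp [Algebra.algebraMap_eq_smul_one])
    fun b c => by ext t; simp [Algebra.algebraMap_eq_smul_one]⟩

end Endpoints

variable {B : Type*} [NormedRing B] [StarRing B] [CStarRing B]
  [NormedAlgebra ℂ B] [CompleteSpace B] [StarModule ℂ B]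

theorem stmt5_general (B₀ B₁ : StarSubalgebra ℂ B)
    (hA : Nonempty (endpointsSubalgebra B₀ B₁ →ₐ[ℂ] ℂ)) :
    Nonempty (B₀ →ₐ[ℂ] ℂ) ∨ Nonempty (B₁ →ₐ[ℂ] ℂ) := by
  obtain ⟨φ⟩ := hA
  obtain ⟨t₀, hφ⟩ := ContinuousMap.exists_algHom_eq_eval (φ.comp (scalarEndpointsAlgHom B₀ B₁))
  by_cases ht₀ : t₀ = 0
  · refine .inl (nonempty_algHom_of_bump φ hφ B₀ ⟨fun t => ((σ t : ℝ) : ℂ), by fun_prop⟩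
      (by simp [ht₀]) fun b hb => ?_)
    simp [hb]
  · have ht₀' : ((t₀ : ℝ) : ℂ) ≠ 0 := Complex.ofReal_ne_zero.2 (coe_ne_zero.2 ht₀)
    refine .inr (nonempty_algHom_of_bump φ hφ B₁ ⟨fun t => (t : ℂ) / t₀, by fun_prop⟩
      (div_self ht₀') fun b hb => ?_)
    simpa using B₁.smul_mem hb _

/-- If `A = {f ∈ C([0,1], B) : f(0) ∈ B₀, f(1) ∈ B₁}` admits a
character, then `B₀` admits a character or `B₁` admits a character. -/
theorem stmt5 (B₀ B₁ : StarSubalgebra ℂ B)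
    (h₀ : IsClosed (B₀ : Set B)) (h₁ : IsClosed (B₁ : Set B))
    (hA : Nonempty (endpointsSubalgebra B₀ B₁ →ₐ[ℂ] ℂ)) :
    Nonempty (B₀ →ₐ[ℂ] ℂ) ∨ Nonempty (B₁ →ₐ[ℂ] ℂ) :=
  stmt5_general B₀ B₁ hA
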